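/- arXiv:2201.06981 — 2 statements merged into one kernel-verified Lean document; each statement's English description precedes it below -/
import Mathlib

section
/- A stochastic matrix (a matrix with nonnegative entries where each column sums to 1) is invertible with stochastic inverse if and only if it is a permutation matrix. -/
/-!
Let `f` and `g` be entrywise nonnegative with `g * f = 1` and `f * g = 1`. Since `(g * f) x x = 1`,
row `x` of `g` has a nonzero entry `g x y`. For `y' ≠ y` the entry `(f * g) y' y = 0` is a sum of
nonnegative terms, one of which is `f y' x * g x y`, so `f y' x = 0`. Hence column `x` of `f` is
supported at `y`, and as it sums to `1`, it is the unit vector at `y`. So `f` is the matrix of a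
map `t : X → Y`, and `g * f = 1`, `f * g = 1` make `t` injective and surjective.
-/

open Finset Function

namespace Matrix

variable {m n R : Type*} [Fintype n] [DecidableEq m]

theorem mul_eq_one_iff_sum_mul [Semiring R] {A : Matrix m n R} {B : Matrix n m R} :
    A * B = 1 ↔ ∀ i i', ∑ j, A i j * B j i' = if i = i' then 1 else 0 := by
  simp only [← Matrix.ext_iff, mul_apply, one_apply]

section Semiring

variable [Semiring R] [Nontrivial R] {A : Matrix m n R} {B : Matrix n m R}

theorem exists_apply_ne_zero_of_mul_eq_one (hAB : A * B = 1) (i : m) : ∃ j, A i j ≠ 0 := by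
  have h : ∑ j, A i j * B j i ≠ 0 := by simp [← mul_apply, hAB]
  obtain ⟨j, -, hj⟩ := exists_ne_zero_of_sum_ne_zero h
  exact ⟨j, left_ne_zero_of_mul hj⟩

theorem bijective_of_mul_eq_one_of_apply_eq_ite [Fintype m] [DecidableEq n] {t : n → m}
    (ht : ∀ i j, A i j = if t j = i then 1 else 0) (hAB : A * B = 1) (hBA : B * A = 1) :
    Bijective t := by
  have hBA_apply : ∀ j j', B j (t j') = if j = j' then 1 else 0 := by
    simpa [mul_eq_one_iff_sum_mul, ht] using hBA
  refine ⟨fun j j' hjj' => ?_, fun i => ?_⟩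
  · by_contra hne
    have h := hBA_apply j j'
    rw [← hjj', hBA_apply j j, if_pos rfl, if_neg hne] at h
    exact one_ne_zero h
  · obtain ⟨j, hj⟩ := exists_apply_ne_zero_of_mul_eq_one hAB i
    exact ⟨j, by_contra fun h => hj (by simp [ht, h])⟩

end Semiring

section OrderedSemiring

variable [Semiring R] [PartialOrder R] [IsOrderedRing R] [NoZeroDivisors R]
  {A : Matrix m n R} {B : Matrix n m R}

theorem apply_eq_zero_of_mul_eq_one_of_apply_ne_zero (hA : ∀ i j, 0 ≤ A i j)
    (hB : ∀ j i, 0 ≤ B j i) (hAB : A * B = 1) {i i' : m} {j : n} (hBji : B j i ≠ 0)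
    (hi : i' ≠ i) : A i' j = 0 := by
  have hsum : ∑ k, A i' k * B k i = 0 := by
    simp [← mul_apply, hAB, one_apply_ne hi]
  have hterm : A i' j * B j i = 0 :=
    (sum_eq_zero_iff_of_nonneg fun k _ => mul_nonneg (hA i' k) (hB k i)).mp hsum j (mem_univ j)
  exact (mul_eq_zero.mp hterm).resolve_right hBji

theorem exists_apply_eq_ite_of_mul_eq_one [Fintype m] [DecidableEq n] [Nontrivial R]
    (hA : ∀ i j, 0 ≤ A i j) (hA1 : ∀ j, ∑ i, A i j = 1) (hB : ∀ j i, 0 ≤ B j i) (hAB : A * B = 1) (hBA : B * A = 1) :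
    ∃ t : n → m, ∀ i j, A i j = if t j = i then 1 else 0 := by
  choose t ht using exists_apply_ne_zero_of_mul_eq_one hBA
  refine ⟨t, fun i j => ?_⟩
  have hcol : ∀ i' ≠ t j, A i' j = 0 := fun i' hi' =>
    apply_eq_zero_of_mul_eq_one_of_apply_ne_zero hA hB hAB (ht j) hi'
  have hdiag : A (t j) j = 1 := by
    rw [← hA1 j, Fintype.sum_eq_single (t j) hcol]
  split_ifs with h
  · exact h ▸ hdiag
  · exact hcol i (Ne.symm h)

end OrderedSemiring

end Matrix

open Matrix

/-- A stochastic matrix is invertible with stochastic inverse iff it is a permutation matrix. -/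
theorem stochastic_invertible_iff_permutation
    {X Y : Type} [Fintype X] [Fintype Y] [DecidableEq X] [DecidableEq Y]
    (f : Y → X → ℝ) (hf0 : ∀ y x, 0 ≤ f y x) (hf1 : ∀ x, ∑ y, f y x = 1) :
    (∃ g : X → Y → ℝ,
      (∀ x y, 0 ≤ g x y) ∧ (∀ y, ∑ x, g x y = 1) ∧
      (∀ x x', ∑ y, g x y * f y x' = if x = x' then (1:ℝ) else 0) ∧
      (∀ y y', ∑ x, f y x * g x y' = if y = y' then (1:ℝ) else 0))
    ↔ ∃ τ : X ≃ Y, ∀ y x, f y x = if τ x = y then (1:ℝ) else 0 := by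
  constructor
  · rintro ⟨g, hg0, -, hgf, hfg⟩
    have hgf' := mul_eq_one_iff_sum_mul.mpr hgf
    have hfg' := mul_eq_one_iff_sum_mul.mpr hfg
    obtain ⟨t, ht⟩ := exists_apply_eq_ite_of_mul_eq_one hf0 hf1 hg0 hfg' hgf'
    exact ⟨.ofBijective t (bijective_of_mul_eq_one_of_apply_eq_ite ht hfg' hgf'), ht⟩
  · rintro ⟨τ, hτ⟩
    refine ⟨fun x y => f y x, fun x y => hf0 y x, fun y => ?_, fun x x' => ?_, fun y y' => ?_⟩
    · simp [hτ, ← Equiv.eq_symm_apply]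
    · simp [hτ, eq_comm]
    · rw [← τ.symm.sum_comp]
      simp [hτ, eq_comm]
end

section
/- Suppose f : X → Y is a stochastic matrix, τ_X : X → X' and τ_Y : Y → Y' are surjective functions with induced deterministic transformations α_X, α_Y. Then there exists a stochastic matrix g : X' → Y' with α_Y · f = g · α_X if and only if f is causally homogeneous with respect to τ_X and τ_Y, i.e., for every x' ∈ X' and y' ∈ Y', the value Σ_{y : τ_Y(y) = y'} f(y,x) is the same for all x with τ_X(x) = x'. -/
/-!
At `(y', x)` the left side of the square is the mass `f(·, x)` puts on the fibre `τY⁻¹(y')` and the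
right side is `g(y', τX x)`; so the square commutes iff these fibre masses factor through `τX`,
which is homogeneity. Conversely, `g(·, x')` is read off at any preimage of `x'`, and it is
stochastic because the fibres of `τY` partition `Y`.
-/

open Finset Function

section FiberMass

variable {X Y Y' : Type} [Fintype Y] [DecidableEq Y']

def fiberMass (f : Y → X → ℝ) (τY : Y → Y') (y' : Y') (x : X) : ℝ :=
  ∑ y ∈ univ.filter (fun y => τY y = y'), f y x

lemma sum_boole_mul_eq_fiberMass (f : Y → X → ℝ) (τY : Y → Y') (y' : Y') (x : X) :
    ∑ y, (if τY y = y' then (1 : ℝ) else 0) * f y x = fiberMass f τY y' x := by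
  simp only [boole_mul, fiberMass, sum_filter]

lemma fiberMass_nonneg {f : Y → X → ℝ} (hf0 : ∀ y x, 0 ≤ f y x) (τY : Y → Y') (y' : Y')
    (x : X) : 0 ≤ fiberMass f τY y' x :=
  sum_nonneg fun y _ => hf0 y x

lemma sum_fiberMass [Fintype Y'] (f : Y → X → ℝ) (τY : Y → Y') (x : X) :
    ∑ y', fiberMass f τY y' x = ∑ y, f y x :=
  sum_fiberwise univ τY (f · x)

end FiberMass

lemma sum_mul_boole_comp {X X' : Type} [Fintype X'] [DecidableEq X'] (g : X' → ℝ)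
    (τX : X → X') (x : X) :
    ∑ x', g x' * (if τX x = x' then (1 : ℝ) else 0) = g (τX x) := by
  simp only [sum_mul_boole, mem_univ, if_true]

theorem abstraction_exists_iff_causally_homogeneous_general
    {X X' Y Y' : Type} [Fintype X] [Fintype X'] [Fintype Y] [Fintype Y']
    [DecidableEq X'] [DecidableEq Y']
    (f : Y → X → ℝ) (hf0 : ∀ y x, 0 ≤ f y x) (hf1 : ∀ x, ∑ y, f y x = 1)
    (τX : X → X') (τY : Y → Y')
    (hτX : Function.Surjective τX) :
    (∃ g : Y' → X' → ℝ,
      (∀ y' x', 0 ≤ g y' x') ∧ (∀ x', ∑ y', g y' x' = 1) ∧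
      (∀ y' x, ∑ y, (if τY y = y' then (1:ℝ) else 0) * f y x
              = ∑ x', g y' x' * (if τX x = x' then (1:ℝ) else 0)))
    ↔ ∀ (x' : X') (y' : Y') (x₁ x₂ : X), τX x₁ = x' → τX x₂ = x' →
        (∑ y ∈ univ.filter (fun y => τY y = y'), f y x₁)
        = ∑ y ∈ univ.filter (fun y => τY y = y'), f y x₂ := by
  simp only [sum_boole_mul_eq_fiberMass, sum_mul_boole_comp]
  constructor
  · rintro ⟨g, -, -, hg⟩ x' y' x₁ x₂ rfl h₂
    change fiberMass f τY y' x₁ = fiberMass f τY y' x₂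
    rw [hg, hg, h₂]
  · intro hhom
    refine ⟨fun y' x' => fiberMass f τY y' (surjInv hτX x'),
      fun y' x' => fiberMass_nonneg hf0 τY y' _,
      fun x' => (sum_fiberMass f τY _).trans (hf1 _),
      fun y' x => hhom (τX x) y' x _ rfl (surjInv_eq hτX _)⟩

/-- Existence of a high-level stochastic matrix making the square with deterministic
transformations commute is equivalent to causal homogeneity. -/
theorem abstraction_exists_iff_causally_homogeneous
    {X X' Y Y' : Type} [Fintype X] [Fintype X'] [Fintype Y] [Fintype Y']
    [DecidableEq X'] [DecidableEq Y']
    [Nonempty X] [Nonempty X'] [Nonempty Y] [Nonempty Y']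
    (f : Y → X → ℝ) (hf0 : ∀ y x, 0 ≤ f y x) (hf1 : ∀ x, ∑ y, f y x = 1)
    (τX : X → X') (τY : Y → Y')
    (hτX : Function.Surjective τX) (hτY : Function.Surjective τY) :
    (∃ g : Y' → X' → ℝ,
      (∀ y' x', 0 ≤ g y' x') ∧ (∀ x', ∑ y', g y' x' = 1) ∧
      (∀ y' x, ∑ y, (if τY y = y' then (1:ℝ) else 0) * f y x
              = ∑ x', g y' x' * (if τX x = x' then (1:ℝ) else 0)))
    ↔ ∀ (x' : X') (y' : Y') (x₁ x₂ : X), τX x₁ = x' → τX x₂ = x' →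
        (∑ y ∈ univ.filter (fun y => τY y = y'), f y x₁)
        = ∑ y ∈ univ.filter (fun y => τY y = y'), f y x₂ :=
  abstraction_exists_iff_causally_homogeneous_general f hf0 hf1 τX τY hτX
end
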